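/- Let G be a numerical semigroup minimally generated by n₁ < n₂ < n₃, and for each i let αᵢ = min{α ∈ ℕ : α·nᵢ lies in the semigroup generated by the other two generators}. Assume α₂·n₂ = α₃·n₃. Then the element z = (α₁ − 1)n₁ + (α₃ − 1)n₃ has a unique representation as a nonnegative integer combination of n₁, n₂, n₃; namely, z = a·n₁ + b·n₂ + c·n₃ with a, b, c ∈ ℕ₀ forces a = α₁ − 1, b = 0, c = α₃ − 1. -/

import Mathlib

/-!
Write `z = A n₁ + C n₃` with `A = α₁ - 1`, `C = α₃ - 1`, and compare a representation
`a n₁ + b n₂ + c n₃` of `z` with the given one. If `c ≥ C`, cancelling `C n₃` leaves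
`b n₂ + (c - C) n₃ = (A - a) n₁` with `A - a < α₁`, so everything vanishes. If `c < C`, then
`(C - c) n₃` is a positive multiple of `n₃` below `α₃ n₃`; it cannot lie in `⟨n₁, n₂⟩`, so
`a < A` and `b n₂ = (A - a) n₁ + (C - c) n₃`. Then `b ≥ α₂`, and trading `α₂ n₂` for `α₃ n₃`
exhibits `(A - a) n₁` in `⟨n₂, n₃⟩`, contradicting the minimality of `α₁`.
-/

section NumericalSemigroup

variable {n1 n2 n3 α1 α2 α3 : ℕ}

theorem eq_zero_of_lt_of_isLeast {p q r α x b c : ℕ}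
    (hα : IsLeast {α : ℕ | 0 < α ∧ ∃ b c : ℕ, α * p = b * q + c * r} α) (hx : x < α)
    (h : x * p = b * q + c * r) : x = 0 := by
  by_contra hx0
  exact absurd (hα.2 ⟨Nat.pos_of_ne_zero hx0, b, c, h⟩) (not_le.mpr hx)

theorem eq_and_eq_zero_of_add_eq_mul_of_lt {a b c A : ℕ}
    (hn1 : 0 < n1) (hn2 : 0 < n2) (hn3 : 0 < n3)
    (hα1 : IsLeast {α : ℕ | 0 < α ∧ ∃ b c : ℕ, α * n1 = b * n2 + c * n3} α1)
    (hA : A < α1) (h : a * n1 + b * n2 + c * n3 = A * n1) :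
    a = A ∧ b = 0 ∧ c = 0 := by
  have ha : a ≤ A :=
    Nat.le_of_mul_le_mul_right (by linarith [Nat.zero_le (b * n2), Nat.zero_le (c * n3)]) hn1
  obtain ⟨d, rfl⟩ := Nat.exists_eq_add_of_le ha
  have hd : d * n1 = b * n2 + c * n3 := by linarith
  obtain rfl := eq_zero_of_lt_of_isLeast hα1 (by omega) hd
  have hbc : b * n2 + c * n3 = 0 := by linarith
  simpa [hn2.ne', hn3.ne'] using hbc

theorem false_of_add_eq_add_mul_of_lt {a b A k : ℕ} (hn3 : 0 < n3)
    (hα1 : IsLeast {α : ℕ | 0 < α ∧ ∃ b c : ℕ, α * n1 = b * n2 + c * n3} α1)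
    (hα2 : IsLeast {α : ℕ | 0 < α ∧ ∃ a c : ℕ, α * n2 = a * n1 + c * n3} α2)
    (hα3 : IsLeast {α : ℕ | 0 < α ∧ ∃ a b : ℕ, α * n3 = a * n1 + b * n2} α3)
    (hrel : α2 * n2 = α3 * n3) (hA : A < α1) (hk0 : 0 < k) (hk : k < α3)
    (h : a * n1 + b * n2 = A * n1 + k * n3) : False := by
  rcases le_or_gt A a with ha | ha
  · obtain ⟨d, rfl⟩ := Nat.exists_eq_add_of_le ha
    have hkd : k * n3 = d * n1 + b * n2 := by linarith
    exact hk0.ne' (eq_zero_of_lt_of_isLeast hα3 hk hkd)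
  · obtain ⟨d, rfl⟩ := Nat.exists_eq_add_of_lt ha
    have hb : b * n2 = (d + 1) * n1 + k * n3 := by linarith
    have hb0 : 0 < b := Nat.pos_of_ne_zero fun hb0 => by subst hb0; nlinarith
    obtain ⟨e, rfl⟩ := Nat.exists_eq_add_of_le (hα2.2 ⟨hb0, d + 1, k, hb⟩)
    obtain ⟨f, rfl⟩ := Nat.exists_eq_add_of_le hk.le
    have hd : (d + 1) * n1 = e * n2 + f * n3 := by linarith
    exact d.succ_ne_zero (eq_zero_of_lt_of_isLeast hα1 (by omega) hd)

end NumericalSemigroup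

theorem stmt_7 (n1 n2 n3 : ℕ) (h1 : 0 < n1) (h12 : n1 < n2) (h23 : n2 < n3)
    (α1 α2 α3 : ℕ)
    (hα1 : IsLeast {α : ℕ | 0 < α ∧ ∃ b c : ℕ, α * n1 = b * n2 + c * n3} α1)
    (hα2 : IsLeast {α : ℕ | 0 < α ∧ ∃ a c : ℕ, α * n2 = a * n1 + c * n3} α2)
    (hα3 : IsLeast {α : ℕ | 0 < α ∧ ∃ a b : ℕ, α * n3 = a * n1 + b * n2} α3)
    (hrel : α2 * n2 = α3 * n3) :
    ∀ a b c : ℕ, a * n1 + b * n2 + c * n3 = (α1 - 1) * n1 + (α3 - 1) * n3 →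
      a = α1 - 1 ∧ b = 0 ∧ c = α3 - 1 := by
  intro a b c h
  have hA : α1 - 1 < α1 := Nat.sub_lt hα1.1.1 one_pos
  have hn3 : 0 < n3 := by omega
  rcases le_or_gt (α3 - 1) c with hc | hc
  · obtain ⟨e, rfl⟩ := Nat.exists_eq_add_of_le hc
    have h' : a * n1 + b * n2 + e * n3 = (α1 - 1) * n1 := by linarith
    obtain ⟨ha, rfl, rfl⟩ := eq_and_eq_zero_of_add_eq_mul_of_lt h1 (by omega) hn3 hα1 hA h'
    exact ⟨ha, rfl, rfl⟩
  · obtain ⟨k, hk⟩ := Nat.exists_eq_add_of_le hc.le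
    have h' : a * n1 + b * n2 = (α1 - 1) * n1 + k * n3 := by rw [hk] at h; linarith
    exact (false_of_add_eq_add_mul_of_lt hn3 hα1 hα2 hα3 hrel hA (by omega) (by omega) h').elim
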